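/- arXiv:2003.12184 — 2 statements merged into one kernel-verified Lean document; each statement's English description precedes it below -/
import Mathlib

section
/- Each vectorized Weyl matrix is an eigenvector of a mixed Weyl superoperator: for Φ = Σ_{k,l} p_{kl} U_{kl} ⊗ conj(U_{kl}) and any m,n ∈ {0,...,N-1}, Φ · vec(U_{mn}) = λ_{mn} · vec(U_{mn}), where λ_{mn} = Σ_{k,l} p_{kl} ω^{ml − kn}. -/
open Matrix Complex
open scoped Kronecker

/-! Since `conj U = (Uᴴ)ᵀ`, the identity `(A ⊗ Bᵀ) vec C = vec (A C B)` turns `U ⊗ conj U` into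
conjugation `C ↦ U C Uᴴ`. The clock and shift matrices satisfy `Z X = ω X Z`, so
`U_{kl} U_{mn} = ω^{ml - kn} U_{mn} U_{kl}`; as `U_{kl}` is unitary this says
`U_{kl} U_{mn} U_{kl}ᴴ = ω^{ml - kn} U_{mn}`, and summing with the weights `p_{kl}` gives `λ_{mn}`. -/

/-- The `N`-th root of unity `ω = exp(2πi/N)`. -/
noncomputable def omega (N : ℕ) : ℂ := Complex.exp (2 * Real.pi * Complex.I / N)

/-- The cyclic shift matrix `X` with `X |i⟩ = |i ⊕ 1⟩`. -/
def Xmat (N : ℕ) [NeZero N] : Matrix (Fin N) (Fin N) ℂ :=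
  fun i j => if i = j + 1 then 1 else 0

/-- The clock matrix `Z = diag(1, ω, ..., ω^{N-1})`. -/
noncomputable def Zmat (N : ℕ) [NeZero N] : Matrix (Fin N) (Fin N) ℂ :=
  Matrix.diagonal (fun j => omega N ^ (j : ℕ))

/-- The Weyl matrices `U_{kl} = X^k Z^l`. -/
noncomputable def WeylU (N : ℕ) [NeZero N] (k l : Fin N) : Matrix (Fin N) (Fin N) ℂ :=
  Xmat N ^ (k : ℕ) * Zmat N ^ (l : ℕ)

/-- Vectorization `vec(A)_{(i,j)} = A_{ij}`. -/
def vecM {N : ℕ} (A : Matrix (Fin N) (Fin N) ℂ) : Fin N × Fin N → ℂ :=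
  fun p => A p.1 p.2

theorem pow_mul_pow_eq_smul_of_mul_eq_smul {R A : Type*} [CommSemiring R] [Semiring A]
    [Algebra R A] {a b : A} {c : R} (h : b * a = c • (a * b)) (l m : ℕ) :
    b ^ l * a ^ m = c ^ (l * m) • (a ^ m * b ^ l) := by
  have hpow : ∀ l : ℕ, b ^ l * a = c ^ l • (a * b ^ l) := by
    intro l
    induction l with
    | zero => simp
    | succ l ih =>
      rw [pow_succ, mul_assoc, h, mul_smul_comm, ← mul_assoc, ih, smul_mul_assoc, smul_smul,
        mul_assoc, ← pow_succ, ← pow_succ']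
  induction m with
  | zero => simp
  | succ m ih =>
    rw [pow_succ, ← mul_assoc, ih, smul_mul_assoc, mul_assoc, hpow, mul_smul_comm,
      smul_smul, ← mul_assoc, ← pow_succ, ← pow_add, Nat.mul_succ]

theorem kronecker_mulVec_vecM {N : ℕ} (A B C : Matrix (Fin N) (Fin N) ℂ) :
    (A ⊗ₖ B) *ᵥ vecM C = vecM (A * C * Bᵀ) := by
  -- Mathlib's `vec` stacks columns, so `vecM C = vec Cᵀ`.
  change (A ⊗ₖ B) *ᵥ vec Cᵀ = vec (A * C * Bᵀ)ᵀ
  rw [kronecker_mulVec_vec, transpose_mul, transpose_mul, transpose_transpose, mul_assoc]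

section Weyl

variable (N : ℕ) [NeZero N]

theorem isPrimitiveRoot_omega : IsPrimitiveRoot (omega N) N :=
  Complex.isPrimitiveRoot_exp N (NeZero.ne N)

theorem Zmat_mul_Xmat : Zmat N * Xmat N = omega N • (Xmat N * Zmat N) := by
  ext i j
  simp only [Zmat, Xmat, diagonal_mul, mul_diagonal, Matrix.smul_apply, smul_eq_mul, mul_ite,
    ite_mul, mul_one, one_mul, mul_zero, zero_mul]
  split_ifs with h
  · have hω := (isPrimitiveRoot_omega N).pow_eq_one
    rw [h, Fin.val_add, ← pow_eq_pow_mod _ hω, pow_add, Fin.val_one', ← pow_eq_pow_mod _ hω,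
      pow_one, mul_comm]
  · rfl

theorem Xmat_mem_unitaryGroup : Xmat N ∈ unitaryGroup (Fin N) ℂ := by
  rw [mem_unitaryGroup_iff']
  ext i j
  simp [Xmat, mul_apply, one_apply, eq_comm]

theorem Zmat_mem_unitaryGroup : Zmat N ∈ unitaryGroup (Fin N) ℂ := by
  rw [mem_unitaryGroup_iff, Zmat, star_eq_conjTranspose, diagonal_conjTranspose,
    diagonal_mul_diagonal, ← diagonal_one]
  congr 1
  funext j
  rw [Pi.star_apply, star_pow, ← mul_pow, RCLike.star_def, mul_conj, normSq_eq_norm_sq,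
    (isPrimitiveRoot_omega N).norm'_eq_one (NeZero.ne N)]
  simp

theorem WeylU_mem_unitaryGroup (k l : Fin N) : WeylU N k l ∈ unitaryGroup (Fin N) ℂ :=
  mul_mem (pow_mem (Xmat_mem_unitaryGroup N) _) (pow_mem (Zmat_mem_unitaryGroup N) _)

theorem WeylU_mul_WeylU (k l m n : Fin N) :
    WeylU N k l * WeylU N m n =
      omega N ^ ((l : ℕ) * m) • (Xmat N ^ ((k : ℕ) + m) * Zmat N ^ ((l : ℕ) + n)) := by
  rw [WeylU, WeylU, mul_assoc, ← mul_assoc (Zmat N ^ _),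
    pow_mul_pow_eq_smul_of_mul_eq_smul (Zmat_mul_Xmat N), smul_mul_assoc, mul_smul_comm]
  simp only [pow_add, mul_assoc]

theorem WeylU_mul_WeylU_comm (k l m n : Fin N) :
    WeylU N k l * WeylU N m n =
      omega N ^ ((m : ℤ) * (l : ℤ) - (k : ℤ) * (n : ℤ)) • (WeylU N m n * WeylU N k l) := by
  rw [WeylU_mul_WeylU, WeylU_mul_WeylU, smul_smul, add_comm (m : ℕ), add_comm (n : ℕ)]
  congr 1
  rw [← zpow_natCast, ← zpow_natCast,
    ← zpow_add₀ ((isPrimitiveRoot_omega N).ne_zero (NeZero.ne N))]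
  congr 1
  push_cast
  ring

theorem WeylU_mul_mul_conjTranspose (k l m n : Fin N) :
    WeylU N k l * WeylU N m n * (WeylU N k l)ᴴ =
      omega N ^ ((m : ℤ) * (l : ℤ) - (k : ℤ) * (n : ℤ)) • WeylU N m n := by
  rw [WeylU_mul_WeylU_comm, smul_mul_assoc, mul_assoc, ← star_eq_conjTranspose,
    mem_unitaryGroup_iff.mp (WeylU_mem_unitaryGroup N k l), mul_one]

theorem WeylU_kronecker_conj_mulVec (k l m n : Fin N) :
    (WeylU N k l ⊗ₖ (WeylU N k l).map (starRingEnd ℂ)) *ᵥ vecM (WeylU N m n) =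
      omega N ^ ((m : ℤ) * (l : ℤ) - (k : ℤ) * (n : ℤ)) • vecM (WeylU N m n) := by
  rw [kronecker_mulVec_vecM]
  exact congrArg vecM (WeylU_mul_mul_conjTranspose N k l m n)

end Weyl

/-- Each vectorized Weyl matrix is an eigenvector of the mixed Weyl superoperator
`Φ = Σ_{kl} p_{kl} U_{kl} ⊗ conj(U_{kl})`, with eigenvalue
`λ_{mn} = Σ_{kl} p_{kl} ω^{ml − kn}`. -/
theorem weyl_superoperator_eigenvector (N : ℕ) [NeZero N]
    (p : Fin N → Fin N → ℂ) (m n : Fin N) :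
    (∑ k, ∑ l, p k l • (WeylU N k l ⊗ₖ (WeylU N k l).map (starRingEnd ℂ)))
        *ᵥ vecM (WeylU N m n)
    = (∑ k, ∑ l, p k l * omega N ^ ((m : ℤ) * (l : ℤ) - (k : ℤ) * (n : ℤ)))
        • vecM (WeylU N m n) := by
  simp only [sum_mulVec, smul_mulVec, WeylU_kronecker_conj_mulVec, smul_smul, Finset.sum_smul]
end

section
/- For the qubit (N=2) Pauli semigroup with interaction times t_1, t_2, t_3 ≥ 0, the probabilities p_0 = (1 + e^{−2(t_2+t_3)} + e^{−2(t_1+t_3)} + e^{−2(t_1+t_2)})/4, p_1 = (1 + e^{−2(t_2+t_3)} − e^{−2(t_1+t_3)} − e^{−2(t_1+t_2)})/4, p_2 = (1 − e^{−2(t_2+t_3)} + e^{−2(t_1+t_3)} − e^{−2(t_1+t_2)})/4, p_3 = (1 − e^{−2(t_2+t_3)} − e^{−2(t_1+t_3)} + e^{−2(t_1+t_2)})/4 are all nonnegative, sum to 1, and satisfy p_0 p_i ≥ p_j p_k for every permutation {i,j,k} of {1,2,3}. -/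
/-!
Write `λ₁ = e^{-2(t₂+t₃)}`, `λ₂ = e^{-2(t₁+t₃)}`, `λ₃ = e^{-2(t₁+t₂)}` for the eigenvalues of the
Pauli channel. The probabilities are their Hadamard transform, and everything follows from
`0 ≤ λᵢ ≤ 1` together with `λⱼ λₖ ≤ λᵢ` (here `λⱼ λₖ = λᵢ e^{-4tᵢ}`): indeed
`4 (1 + λᵢ - λⱼ - λₖ) ≥ 4 (1 - λⱼ)(1 - λₖ) ≥ 0` and `16 (p₀ pᵢ - pⱼ pₖ) = 4 (λᵢ - λⱼ λₖ)`.
-/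

open Real

section PauliEigenvalues

variable {x y z : ℝ}

theorem one_add_sub_sub_nonneg_of_mul_le (hy : y ≤ 1) (hz : z ≤ 1) (h : y * z ≤ x) :
    0 ≤ 1 + x - y - z := by
  nlinarith [mul_nonneg (sub_nonneg.2 hy) (sub_nonneg.2 hz)]

theorem hadamard_mul_le_hadamard_mul_of_mul_le (h : y * z ≤ x) :
    (1 - x + y - z) / 4 * ((1 - x - y + z) / 4) ≤
      (1 + x + y + z) / 4 * ((1 + x - y - z) / 4) := by
  linear_combination h / 4

theorem pauli_probabilities_of_eigenvalues (hx₀ : 0 ≤ x) (hy₀ : 0 ≤ y) (hz₀ : 0 ≤ z)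
    (hx₁ : x ≤ 1) (hy₁ : y ≤ 1) (hz₁ : z ≤ 1)
    (hyz : y * z ≤ x) (hxz : x * z ≤ y) (hxy : x * y ≤ z) :
    let p₀ := (1 + x + y + z) / 4
    let p₁ := (1 + x - y - z) / 4
    let p₂ := (1 - x + y - z) / 4
    let p₃ := (1 - x - y + z) / 4
    (0 ≤ p₀ ∧ 0 ≤ p₁ ∧ 0 ≤ p₂ ∧ 0 ≤ p₃) ∧
    p₀ + p₁ + p₂ + p₃ = 1 ∧
    (p₀ * p₁ ≥ p₂ * p₃ ∧ p₀ * p₂ ≥ p₁ * p₃ ∧ p₀ * p₃ ≥ p₁ * p₂) := by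
  dsimp only
  have h₁ := one_add_sub_sub_nonneg_of_mul_le hy₁ hz₁ hyz
  have h₂ := one_add_sub_sub_nonneg_of_mul_le hx₁ hz₁ hxz
  have h₃ := one_add_sub_sub_nonneg_of_mul_le hx₁ hy₁ hxy
  refine ⟨⟨by positivity, by linarith, by linarith, by linarith⟩, by ring, ?_, ?_, ?_⟩
  · exact hadamard_mul_le_hadamard_mul_of_mul_le hyz
  · linarith [hadamard_mul_le_hadamard_mul_of_mul_le (x := y) hxz]
  · linarith [hadamard_mul_le_hadamard_mul_of_mul_le (x := z) hxy]

end PauliEigenvalues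

theorem exp_neg_two_mul_mul_le {a b c : ℝ} (h : c ≤ a + b) :
    exp (-2 * a) * exp (-2 * b) ≤ exp (-2 * c) := by
  rw [← exp_add]
  exact exp_le_exp.2 (by linarith)

/-- For the qubit Pauli semigroup with interaction times `t₁, t₂, t₃ ≥ 0`, the resulting
probabilities `p₀, p₁, p₂, p₃` are nonnegative, sum to one, and satisfy
`p₀ p_i ≥ p_j p_k` for every permutation `{i,j,k}` of `{1,2,3}`. -/
theorem pauli_semigroup_probabilities (t₁ t₂ t₃ : ℝ)
    (h₁ : 0 ≤ t₁) (h₂ : 0 ≤ t₂) (h₃ : 0 ≤ t₃) :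
    let p₀ := (1 + exp (-2*(t₂+t₃)) + exp (-2*(t₁+t₃)) + exp (-2*(t₁+t₂))) / 4
    let p₁ := (1 + exp (-2*(t₂+t₃)) - exp (-2*(t₁+t₃)) - exp (-2*(t₁+t₂))) / 4
    let p₂ := (1 - exp (-2*(t₂+t₃)) + exp (-2*(t₁+t₃)) - exp (-2*(t₁+t₂))) / 4
    let p₃ := (1 - exp (-2*(t₂+t₃)) - exp (-2*(t₁+t₃)) + exp (-2*(t₁+t₂))) / 4
    (0 ≤ p₀ ∧ 0 ≤ p₁ ∧ 0 ≤ p₂ ∧ 0 ≤ p₃) ∧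
    p₀ + p₁ + p₂ + p₃ = 1 ∧
    (p₀ * p₁ ≥ p₂ * p₃ ∧ p₀ * p₂ ≥ p₁ * p₃ ∧ p₀ * p₃ ≥ p₁ * p₂) := by
  have le_one : ∀ {s t : ℝ}, 0 ≤ s → 0 ≤ t → exp (-2 * (s + t)) ≤ 1 :=
    fun hs ht => exp_le_one_iff.2 (by linarith)
  exact pauli_probabilities_of_eigenvalues (exp_pos _).le (exp_pos _).le (exp_pos _).le
    (le_one h₂ h₃) (le_one h₁ h₃) (le_one h₁ h₂)
    (exp_neg_two_mul_mul_le (by linarith)) (exp_neg_two_mul_mul_le (by linarith))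
    (exp_neg_two_mul_mul_le (by linarith))
end
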